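/- Consider the inertial projection DCA iteration x^{k+1} = P_C((1 + γ/η)x^k − (γ/η)x^{k−1} − (1/η)(Qx^k + q)) for the quadratic program with Q = diag(2,−2), q = 0, C = {(x₁,x₂) : x₁ ≥ |x₂|, x₁ ≥ 1/4}, η = 3, γ = 1/3. If x^{−1} = x^0 = (1/4 + t, 1/4 + t) for some t ≥ 0 (i.e., x^0 lies on the face F₁), then x^1 = x^0; hence every point of F₁ is a fixed point of the iteration. -/
import Mathlib


open Set

noncomputable section

/-- Euclidean distance on `ℝ²`. -/
def dE (p q : ℝ × ℝ) : ℝ := Real.sqrt ((p.1 - q.1) ^ 2 + (p.2 - q.2) ^ 2)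

set_option maxHeartbeats 1000000 in
/-- For the inertial projection DCA iteration
`x^{k+1} = P_C((1 + γ/η)x^k − (γ/η)x^{k−1} − (1/η)(Qx^k + q))` with `Q = diag(2,−2)`, `q = 0`,
`C = {x₁ ≥ |x₂|, x₁ ≥ 1/4}`, `η = 3`, `γ = 1/3`: if `x^{−1} = x^0 = (1/4+t, 1/4+t)` with
`t ≥ 0`, then `x^1 = x^0`, i.e. `x^0` is the (unique) nearest point of `C` to the
pre-projection vector; hence every point of `F₁` is a fixed point of the iteration. -/
theorem stmt18
    (C : Set (ℝ × ℝ)) (hC : C = {p | |p.2| ≤ p.1 ∧ 1 / 4 ≤ p.1})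
    (η γ : ℝ) (hη : η = 3) (hγ : γ = 1 / 3) :
    ∀ t : ℝ, 0 ≤ t →
      ∀ x0 : ℝ × ℝ, x0 = (1 / 4 + t, 1 / 4 + t) →
      ∀ p : ℝ × ℝ,
        p = ((1 + γ / η) * x0.1 - (γ / η) * x0.1 - (1 / η) * (2 * x0.1 + 0),
             (1 + γ / η) * x0.2 - (γ / η) * x0.2 - (1 / η) * (-2 * x0.2 + 0)) →
      x0 ∈ C ∧ (∀ u ∈ C, dE p x0 ≤ dE p u) ∧
        (∀ z ∈ C, (∀ u ∈ C, dE p z ≤ dE p u) → z = x0) := by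
  intro t ht x0 hx0 p hp
  subst hC hη hγ hx0
  have hp1 : p.1 = 1 / 12 + t / 3 := by rw [hp]; ring
  have hp2 : p.2 = 5 / 12 + 5 * t / 3 := by rw [hp]; ring
  clear hp
  have habs : |(1 / 4 + t : ℝ)| = 1 / 4 + t := abs_of_nonneg (by linarith)
  have hmem : ((1 / 4 + t, 1 / 4 + t) : ℝ × ℝ) ∈
      {p : ℝ × ℝ | |p.2| ≤ p.1 ∧ 1 / 4 ≤ p.1} := ⟨habs.le, by linarith⟩
  refine ⟨hmem, ?_, ?_⟩
  · intro u hu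
    obtain ⟨hu1, hu2⟩ := hu
    have h1 : -u.1 ≤ u.2 ∧ u.2 ≤ u.1 := abs_le.mp hu1
    unfold dE
    apply Real.sqrt_le_sqrt
    simp only [hp1, hp2]
    nlinarith [sq_nonneg (u.1 - (1/4+t)), sq_nonneg (u.2 - (1/4+t)), h1.2, ht]
  · intro z hz hmin
    obtain ⟨hz1, hz2⟩ := hz
    have h1 : -z.1 ≤ z.2 ∧ z.2 ≤ z.1 := abs_le.mp hz1
    have hle : dE p z ≤ dE p (1 / 4 + t, 1 / 4 + t) := hmin _ hmem
    have hnn : (0:ℝ) ≤ (p.1 - z.1) ^ 2 + (p.2 - z.2) ^ 2 := by positivity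
    have hnn' : (0:ℝ) ≤ (p.1 - (1/4+t)) ^ 2 + (p.2 - (1/4+t)) ^ 2 := by positivity
    unfold dE at hle
    have hsq : (p.1 - z.1) ^ 2 + (p.2 - z.2) ^ 2 ≤
        (p.1 - (1/4+t)) ^ 2 + (p.2 - (1/4+t)) ^ 2 := by
      nlinarith [Real.sq_sqrt hnn, Real.sq_sqrt hnn',
        Real.sqrt_nonneg ((p.1 - z.1) ^ 2 + (p.2 - z.2) ^ 2),
        Real.sqrt_nonneg ((p.1 - (1/4+t)) ^ 2 + (p.2 - (1/4+t)) ^ 2), hle]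
    simp only [hp1, hp2] at hsq
    have hz12 : 0 ≤ z.1 - z.2 := by linarith [h1.2]
    have key : (z.1 - (1/4+t)) ^ 2 + (z.2 - (1/4+t)) ^ 2 ≤ 0 := by
      nlinarith [hsq, mul_nonneg (show (0:ℝ) ≤ 4*(1/4+t)/3 by linarith) hz12]
    have s1 : z.1 - (1/4+t) = 0 := by
      have h0 : (z.1 - (1/4+t)) ^ 2 ≤ 0 := by nlinarith [sq_nonneg (z.2 - (1/4+t))]
      exact pow_eq_zero_iff two_ne_zero |>.mp (le_antisymm h0 (sq_nonneg _))
    have s2 : z.2 - (1/4+t) = 0 := by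
      have h0 : (z.2 - (1/4+t)) ^ 2 ≤ 0 := by nlinarith [sq_nonneg (z.1 - (1/4+t))]
      exact pow_eq_zero_iff two_ne_zero |>.mp (le_antisymm h0 (sq_nonneg _))
    exact Prod.ext (by linarith) (by linarith)
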